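/- arXiv:1512.07676 — 6 statements merged into one kernel-verified Lean document; each statement's English description precedes it below -/
import Mathlib

section
/- For every n ≥ 3, the second cohomology H²(𝔪₀(n)) of 𝔪₀(n) over ℤ₂ has as a basis the cohomology classes of e¹ ∧ eⁿ and of the elements F(eⁱ, eⁱ) = Σ_{l=0}^{i−2} e^{i−l} ∧ e^{i+1+l} for 2 ≤ i ≤ (n+1)/2; in particular the second Betti number satisfies b₂(𝔪₀(n)) = ⌊(n+1)/2⌋. -/
set_option maxSynthPendingDepth 3

/-- The field `ℤ₂ = ℤ/2ℤ`. -/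
abbrev K2 : Type := ZMod 2

/-- The exterior algebra over `ℤ₂` on generators `e 1, e 2, …`, realized as the free
`ℤ₂`-module on the square-free monomials `e^S`, indexed by finite sets `S` of indices
(over `ℤ₂` all signs are trivial). -/
abbrev Lam : Type := Finset ℕ →₀ K2

/-- The generator `eⁱ` (the `i`-th dual basis vector). -/
noncomputable def e (i : ℕ) : Lam := Finsupp.single {i} 1

/-- The wedge product: on monomials, `e^S ∧ e^T = e^(S ∪ T)` if `S` and `T` are disjoint and `0`
otherwise (there are no signs over `ℤ₂`); extended bilinearly. -/
noncomputable def wedge (x y : Lam) : Lam :=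
  x.sum fun S a => y.sum fun T b =>
    if Disjoint S T then Finsupp.single (S ∪ T) (a * b) else 0

/-- A derivation of the exterior algebra (over `ℤ₂` all signs are trivial, so the relevant
operators are ordinary derivations). -/
def IsDerivation (D : Module.End K2 Lam) : Prop :=
  ∀ x y : Lam, D (wedge x y) = wedge (D x) y + wedge x (D y)

/-- The subalgebra `Λ(span (eⁱ : i ∈ I))` of the exterior algebra: the span of the monomials
`e^S` with all indices in `I`. -/
noncomputable def lamOn (I : Set ℕ) : Submodule K2 Lam :=
  Submodule.span K2 {x | ∃ S : Finset ℕ, ↑S ⊆ I ∧ x = Finsupp.single S (1 : K2)}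

/-- `Λ^q`: the span of the monomials of rank `q` with indices in `I`. -/
noncomputable def rankPiece (I : Set ℕ) (q : ℕ) : Submodule K2 Lam :=
  Submodule.span K2
    {x | ∃ S : Finset ℕ, ↑S ⊆ I ∧ S.card = q ∧ x = Finsupp.single S (1 : K2)}

/-- `Λ^q_k`: the span of the monomials of rank `q` and degree (weight) `k`, indices in `I`. -/
noncomputable def gradedPiece (I : Set ℕ) (q k : ℕ) : Submodule K2 Lam :=
  Submodule.span K2
    {x | ∃ S : Finset ℕ, ↑S ⊆ I ∧ S.card = q ∧ S.sum id = k ∧ x = Finsupp.single S (1 : K2)}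

/-- The cohomology class in `Z ⧸ (B ∩ Z)` of a cocycle `x ∈ Z` (defined to be `0` if `x ∉ Z`). -/
noncomputable def cls (Z B : Submodule K2 Lam) (x : Lam) :
    ↥Z ⧸ Submodule.comap Z.subtype B := by
  classical exact if hx : x ∈ Z then Submodule.Quotient.mk ⟨x, hx⟩ else 0

/-- `F(ω, eⁱ) = Σ_{l ≥ 0} (Dˡ ω) ∧ e^{i+1+l}`, truncated at `l < N`; as soon as `D^N ω = 0`,
this is the full (finite) sum. -/
noncomputable def Ftrunc (D : Module.End K2 Lam) (N : ℕ) (ω : Lam) (i : ℕ) : Lam :=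
  ∑ l ∈ Finset.range N, wedge ((D ^ l) ω) (e (i + 1 + l))

/-- The largest index `i_q` of a monomial `e^S`, `S = {i₁ < … < i_q}`. -/
def maxIdx (S : Finset ℕ) : ℕ := S.sup id

/-- `F(e^S, eⁱ)` for a monomial `e^S`: since `D` lowers the degree by one, truncating the sum
at the degree of `e^S` already yields the full sum `Σ_{l ≥ 0} (Dˡ e^S) ∧ e^{i+1+l}`. -/
noncomputable def Fmono (D : Module.End K2 Lam) (S : Finset ℕ) (i : ℕ) : Lam :=
  Ftrunc D (S.sum id + 1) (Finsupp.single S 1) i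

/-- `F(eⁱ, eⁱ) = eⁱ ∧ e^{i+1} + e^{i−1} ∧ e^{i+2} + ⋯ + e² ∧ e^{2i−1}`. -/
noncomputable def F1 (i : ℕ) : Lam :=
  ∑ l ∈ Finset.range (i - 1), wedge (e (i - l)) (e (i + 1 + l))

/-!
Write a 2-cochain as `x = Σ x{i,j} eⁱ ∧ eʲ`. The differential of a 2-cochain is a combination of
the monomials `e¹ ∧ eᵃ ∧ eᵇ` (`2 ≤ a < b ≤ n`), and the coefficient of `e¹ ∧ eᵃ ∧ eᵇ` in `dx` is
`x{a+1,b} + x{a,b+1}`. So `x` is a cocycle iff its coefficients with both indices `≥ 2` are constant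
along the antidiagonals `i + j = s`, where they vanish beyond the index `n` and on the diagonal:
they vanish for even `s` and for `s > n + 2`, and for odd `s = 2i + 1 ≤ n + 2` they are the
coefficient of `F(eⁱ, eⁱ)`; the coefficients `x{1,j}` are unconstrained. The coboundaries
`d eʲ = e¹ ∧ e^{j−1}` span the `e¹ ∧ eʲ` with `j < n`, so the coefficients at `e¹ ∧ eⁿ` and at
`e² ∧ e^{2i−1}` are coordinates on `H²` dual to the classes of `e¹ ∧ eⁿ` and `F(eⁱ, eⁱ)`.
-/

open Finsupp

section LinearAlgebra

variable {R M ι : Type*} [CommRing R] [AddCommGroup M] [Module R M] [Finite ι] [DecidableEq ι]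

theorem linearIndependent_and_span_eq_top_of_injective {f : M →ₗ[R] ι → R}
    (hf : Function.Injective f) {v : ι → M} (hv : ∀ k, f (v k) = Pi.single k 1) :
    LinearIndependent R v ∧ Submodule.span R (Set.range v) = ⊤ := by
  have hfv : f ∘ v = Pi.basisFun R ι := funext fun k => by simp [hv]
  refine ⟨.of_comp f (hfv ▸ (Pi.basisFun R ι).linearIndependent), ?_⟩
  have hmap : (Submodule.span R (Set.range v)).map f = ⊤ := by
    rw [Submodule.map_span, ← Set.range_comp, hfv, (Pi.basisFun R ι).span_eq]
  exact Submodule.map_injective_of_injective hf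
    (hmap.trans (top_unique (hmap ▸ Submodule.map_mono le_top)).symm)

theorem linearIndependent_and_span_eq_top_quotient {Z B : Submodule R M} (x : ι → Z)
    (φ : ι → M →ₗ[R] R) (hB : ∀ k, ∀ b ∈ B, φ k b = 0)
    (hdual : ∀ k k', φ k' (x k) = (Pi.single k 1 : ι → R) k')
    (hker : ∀ z ∈ Z, (∀ k, φ k z = 0) → z ∈ B) :
    LinearIndependent R (fun k => Submodule.Quotient.mk (p := B.comap Z.subtype) (x k)) ∧
      Submodule.span R
        (Set.range fun k => Submodule.Quotient.mk (p := B.comap Z.subtype) (x k)) = ⊤ := by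
  let f : Z →ₗ[R] ι → R := LinearMap.pi φ ∘ₗ Z.subtype
  have hfB : B.comap Z.subtype ≤ LinearMap.ker f := fun z hz => funext fun k => hB k _ hz
  refine linearIndependent_and_span_eq_top_of_injective (f := (B.comap Z.subtype).liftQ f hfB)
    ?_ fun k => funext (hdual k)
  rw [← LinearMap.ker_eq_bot]
  exact Submodule.ker_liftQ_eq_bot _ _ _ fun z hz => hker z z.2 (congrFun hz)

end LinearAlgebra

theorem apply_eq_apply_two_of_shift {α : Type*} [Zero α] {n : ℕ} {f : ℕ → ℕ → α}
    (hout : ∀ i j, n < j → f i j = 0)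
    (hshift : ∀ a b, 2 ≤ a → a < b → b ≤ n → f (a + 1) b = f a (b + 1))
    {i j : ℕ} (hi : 2 ≤ i) (hij : i ≤ j) : f i j = f 2 (i + j - 2) := by
  induction i, hi using Nat.le_induction generalizing j with
  | base => simp
  | succ i hi ih =>
    rcases le_or_gt j n with hj | hj
    · rw [hshift i j hi (by omega) hj, ih (by omega)]
      congr 1
      omega
    · rw [hout _ _ hj, hout _ _ (by omega)]

theorem Finset.pair_eq_pair_iff {α : Type*} [DecidableEq α] {a b c d : α} :
    ({a, b} : Finset α) = {c, d} ↔ a = c ∧ b = d ∨ a = d ∧ b = c := by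
  rw [← Finset.coe_inj]
  push_cast
  exact Set.pair_eq_pair_iff

theorem Finset.exists_lt_of_card_eq_two {α : Type*} [LinearOrder α] {S : Finset α}
    (h : S.card = 2) : ∃ a b, a < b ∧ S = {a, b} := by
  obtain ⟨a, b, hab, rfl⟩ := Finset.card_eq_two.1 h
  rcases hab.lt_or_gt with hab | hab
  · exact ⟨a, b, hab, rfl⟩
  · exact ⟨b, a, hab, Finset.pair_comm a b⟩

theorem one_triple_eq_iff {p q u v : ℕ} (hp : 1 < p) (hpq : p < q) (hu : 1 < u) (huv : u < v) :
    ({1, p, q} : Finset ℕ) = {1, u, v} ↔ p = u ∧ q = v := by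
  refine ⟨fun h => ?_, by rintro ⟨rfl, rfl⟩; rfl⟩
  have hp' : p ∈ ({1, u, v} : Finset ℕ) := h ▸ by simp
  have hq' : q ∈ ({1, u, v} : Finset ℕ) := h ▸ by simp
  have hu' : u ∈ ({1, p, q} : Finset ℕ) := h ▸ by simp
  have hv' : v ∈ ({1, p, q} : Finset ℕ) := h ▸ by simp
  simp only [Finset.mem_insert, Finset.mem_singleton] at hp' hq' hu' hv'
  omega

theorem single_pair_apply_pair {i j c d : ℕ} (hij : i < j) (hcd : c ≤ d) :
    (single {i, j} 1 : Lam) {c, d} = if i = c ∧ j = d then 1 else 0 := by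
  simp only [single_apply, Finset.pair_eq_pair_iff]
  split_ifs <;> first | rfl | omega

theorem single_one_triple_apply {p q a b : ℕ} (hp : 1 < p) (hpq : p < q) (ha : 1 < a)
    (hab : a < b) : (single {1, p, q} 1 : Lam) {1, a, b} = if p = a ∧ q = b then 1 else 0 := by
  rw [single_apply, if_congr (one_triple_eq_iff hp hpq ha hab) rfl rfl]

theorem exists_pair_of_subset_Icc {n : ℕ} {S : Finset ℕ} (hS : ↑S ⊆ Set.Icc 1 n)
    (hcard : S.card = 2) : ∃ i j, 1 ≤ i ∧ i < j ∧ j ≤ n ∧ S = {i, j} := by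
  obtain ⟨i, j, hij, rfl⟩ := Finset.exists_lt_of_card_eq_two hcard
  have hi := hS (by simp : i ∈ _)
  have hj := hS (by simp : j ∈ _)
  exact ⟨i, j, hi.1, hij, hj.2, rfl⟩

theorem rankPiece_eq_supported (I : Set ℕ) (q : ℕ) :
    rankPiece I q = supported K2 K2 {S : Finset ℕ | ↑S ⊆ I ∧ S.card = q} := by
  rw [supported_eq_span_single, rankPiece]
  congr 1
  ext x
  simp [eq_comm, and_assoc]

theorem apply_eq_zero_of_mem_rankPiece {I : Set ℕ} {q : ℕ} {x : Lam} (hx : x ∈ rankPiece I q)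
    {S : Finset ℕ} (hS : ¬(↑S ⊆ I ∧ S.card = q)) : x S = 0 := by
  rw [rankPiece_eq_supported, mem_supported'] at hx
  exact hx S hS

theorem single_mem_rankPiece {I : Set ℕ} {S : Finset ℕ} (hS : ↑S ⊆ I) (c : K2) :
    single S c ∈ rankPiece I S.card := by
  rw [rankPiece_eq_supported]
  exact single_mem_supported K2 c ⟨hS, rfl⟩

theorem pair_mem_rankPiece {n a b : ℕ} (ha : 1 ≤ a) (hab : a < b) (hb : b ≤ n) (c : K2) :
    single {a, b} c ∈ rankPiece (Set.Icc 1 n) 2 := by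
  have hS : (({a, b} : Finset ℕ) : Set ℕ) ⊆ Set.Icc 1 n := by
    simp only [Finset.coe_insert, Finset.coe_singleton, Set.insert_subset_iff,
      Set.singleton_subset_iff, Set.mem_Icc]
    omega
  simpa only [Finset.card_pair hab.ne] using single_mem_rankPiece hS c

theorem wedge_single_single (S T : Finset ℕ) (a b : K2) :
    wedge (single S a) (single T b) = if Disjoint S T then single (S ∪ T) (a * b) else 0 := by
  unfold wedge
  rw [sum_single_index, sum_single_index] <;> simp

theorem e_wedge_e {i j : ℕ} (h : i ≠ j) : wedge (e i) (e j) = single {i, j} 1 := by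
  rw [e, e, wedge_single_single, if_pos (by simpa using h), one_mul]
  rfl

theorem single_wedge_e (S : Finset ℕ) (q : ℕ) :
    wedge (single S 1) (e q) = if q ∈ S then 0 else single (insert q S) 1 := by
  rw [e, wedge_single_single, one_mul]
  by_cases h : q ∈ S <;> simp [h]

theorem e_wedge_single (S : Finset ℕ) (q : ℕ) :
    wedge (e q) (single S 1) = if q ∈ S then 0 else single (insert q S) 1 := by
  rw [e, wedge_single_single, one_mul]
  by_cases h : q ∈ S <;> simp [h]

theorem F1_eq_sum_single (i : ℕ) :
    F1 i = ∑ l ∈ Finset.range (i - 1), single {i - l, i + 1 + l} 1 :=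
  Finset.sum_congr rfl fun l _ => e_wedge_e (by omega)

theorem F1_mem_rankPiece {n i : ℕ} (h : 2 * i ≤ n + 1) : F1 i ∈ rankPiece (Set.Icc 1 n) 2 := by
  rw [F1_eq_sum_single]
  refine Submodule.sum_mem _ fun l hl => ?_
  rw [Finset.mem_range] at hl
  exact pair_mem_rankPiece (by omega) (by omega) (by omega) 1

theorem F1_apply_pair {i a b : ℕ} (hab : a < b) :
    F1 i {a, b} = if 2 ≤ a ∧ a + b = 2 * i + 1 then 1 else 0 := by
  rw [F1_eq_sum_single, Finsupp.finsetSum_apply]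
  split_ifs with h
  · rw [Finset.sum_eq_single (i - a)]
    · rw [single_pair_apply_pair (by omega) hab.le, if_pos (by omega)]
    · intro l hl hla
      rw [Finset.mem_range] at hl
      rw [single_pair_apply_pair (by omega) hab.le, if_neg (by omega)]
    · intro hia
      rw [Finset.mem_range] at hia
      omega
  · refine Finset.sum_eq_zero fun l hl => ?_
    rw [Finset.mem_range] at hl
    rw [single_pair_apply_pair (by omega) hab.le, if_neg (by omega)]

def oneTriples (n : ℕ) : Set (Finset ℕ) :=
  {T | ∃ a b, 2 ≤ a ∧ a < b ∧ b ≤ n ∧ T = {1, a, b}}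

def onePairs (n : ℕ) : Set (Finset ℕ) :=
  {S | ∃ j, 2 ≤ j ∧ j < n ∧ S = {1, j}}

abbrev F1Index (n : ℕ) : Type := {i : ℕ // 2 ≤ i ∧ 2 * i ≤ n + 1}

def F1IndexEquivIcc (n : ℕ) : F1Index n ≃ Finset.Icc 2 ((n + 1) / 2) :=
  Equiv.subtypeEquivRight fun i => by
    rw [Finset.mem_Icc]
    omega

instance (n : ℕ) : Finite (F1Index n) := .of_equiv _ (F1IndexEquivIcc n).symm

theorem card_F1Index (n : ℕ) : Nat.card (F1Index n) = (n + 1) / 2 - 1 := by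
  rw [Nat.card_congr (F1IndexEquivIcc n), Nat.card_eq_fintype_card, Fintype.card_coe,
    Nat.card_Icc]
  omega

noncomputable def h2Rep (n : ℕ) : Unit ⊕ F1Index n → Lam :=
  Sum.elim (fun _ => wedge (e 1) (e n)) fun i => F1 i.1

/-- A monomial at which each representative, and no other, has coefficient one. -/
def h2Coord (n : ℕ) : Unit ⊕ F1Index n → Finset ℕ :=
  Sum.elim (fun _ => {1, n}) fun i => {2, 2 * i.1 - 1}

theorem h2Rep_apply_h2Coord {n : ℕ} (hn : 2 ≤ n) (k k' : Unit ⊕ F1Index n) :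
    h2Rep n k (h2Coord n k') = (Pi.single k 1 : Unit ⊕ F1Index n → K2) k' := by
  rcases k with _ | ⟨i, hi⟩ <;> rcases k' with _ | ⟨i', hi'⟩ <;>
    simp only [h2Rep, h2Coord, Sum.elim_inl, Sum.elim_inr, e_wedge_e (by omega : 1 ≠ n)]
  · simp
  · rw [single_pair_apply_pair (by omega) (by omega), if_neg (by omega), Pi.single_apply,
      if_neg Sum.inr_ne_inl]
  · rw [F1_apply_pair (by omega), if_neg (by omega), Pi.single_apply, if_neg Sum.inl_ne_inr]
  · rw [F1_apply_pair (by omega), Pi.single_apply]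
    simp only [Sum.inr.injEq, Subtype.mk.injEq]
    split_ifs <;> first | rfl | omega

theorem h2Coord_notMem_onePairs {n : ℕ} (k : Unit ⊕ F1Index n) : h2Coord n k ∉ onePairs n := by
  rintro ⟨j, hj2, hjn, h⟩
  rcases k with _ | ⟨i, hi⟩ <;>
    simp only [h2Coord, Sum.elim_inl, Sum.elim_inr, Finset.pair_eq_pair_iff] at h <;> omega

structure IsM0Differential (n : ℕ) (d : Module.End K2 Lam) : Prop where
  isDerivation : IsDerivation d
  apply_e_one : d (e 1) = 0
  apply_e_two : d (e 2) = 0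
  apply_e_of_three_le : ∀ i, 3 ≤ i → i ≤ n → d (e i) = wedge (e 1) (e (i - 1))

namespace IsM0Differential

variable {n : ℕ} {d : Module.End K2 Lam}

theorem apply_e (hd : IsM0Differential n d) {i : ℕ} (h1 : 1 ≤ i) (hi : i ≤ n) :
    d (e i) = if 3 ≤ i then single {1, i - 1} 1 else 0 := by
  split_ifs with h3
  · rw [hd.apply_e_of_three_le i h3 hi, e_wedge_e (by omega)]
  · obtain rfl | rfl : i = 1 ∨ i = 2 := by omega
    exacts [hd.apply_e_one, hd.apply_e_two]

theorem apply_pair (hd : IsM0Differential n d) {i j : ℕ} (h1 : 1 ≤ i) (hij : i < j)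
    (hj : j ≤ n) :
    d (single {i, j} 1) = (if 3 ≤ i then single {1, i - 1, j} 1 else 0) +
      (if 3 ≤ j ∧ 2 ≤ i ∧ i + 1 ≠ j then single {1, i, j - 1} 1 else 0) := by
  rw [← e_wedge_e hij.ne, hd.isDerivation, hd.apply_e h1 (by omega), hd.apply_e (by omega) hj]
  congr 1
  · split_ifs
    · rw [single_wedge_e, if_neg (by simp only [Finset.mem_insert, Finset.mem_singleton]; omega),
        Finset.insert_comm, Finset.pair_comm j]
    · simp [wedge]
  · by_cases h3 : 3 ≤ j
    · rw [if_pos h3, e_wedge_single]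
      by_cases h : 2 ≤ i ∧ i + 1 ≠ j
      · rw [if_neg (by simp only [Finset.mem_insert, Finset.mem_singleton]; omega),
          if_pos ⟨h3, h⟩, Finset.insert_comm]
      · rw [if_pos (by simp only [Finset.mem_insert, Finset.mem_singleton]; omega),
          if_neg (by tauto)]
    · rw [if_neg h3, if_neg (by tauto)]
      simp [wedge]

theorem apply_pair_mem_supported (hd : IsM0Differential n d) {i j : ℕ} (h1 : 1 ≤ i)
    (hij : i < j) (hj : j ≤ n) : d (single {i, j} 1) ∈ supported K2 K2 (oneTriples n) := by
  rw [hd.apply_pair h1 hij hj]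
  refine Submodule.add_mem _ ?_ ?_ <;> split_ifs <;>
    first
    | exact zero_mem _
    | exact single_mem_supported K2 1 ⟨_, _, by omega, by omega, by omega, rfl⟩

theorem apply_pair_apply_oneTriple (hd : IsM0Differential n d) {i j : ℕ} (h1 : 1 ≤ i)
    (hij : i < j) (hj : j ≤ n) {a b : ℕ} (ha : 2 ≤ a) (hab : a < b) :
    d (single {i, j} 1) {1, a, b} =
      (single {i, j} 1 : Lam) {a + 1, b} + (single {i, j} 1 : Lam) {a, b + 1} := by
  rw [hd.apply_pair h1 hij hj, Finsupp.add_apply, single_pair_apply_pair hij (by omega),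
    single_pair_apply_pair hij (by omega)]
  congr 1
  · by_cases h3 : 3 ≤ i
    · rw [if_pos h3, single_one_triple_apply (by omega) (by omega) (by omega) hab]
      split_ifs <;> first | rfl | omega
    · rw [if_neg h3, Finsupp.coe_zero, Pi.zero_apply, if_neg (by omega)]
  · by_cases h3 : 3 ≤ j ∧ 2 ≤ i ∧ i + 1 ≠ j
    · rw [if_pos h3, single_one_triple_apply (by omega) (by omega) (by omega) hab]
      split_ifs <;> first | rfl | omega
    · rw [if_neg h3, Finsupp.coe_zero, Pi.zero_apply, if_neg (by omega)]

theorem map_rankPiece_two_le (hd : IsM0Differential n d) :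
    (rankPiece (Set.Icc 1 n) 2).map d ≤ supported K2 K2 (oneTriples n) := by
  rw [rankPiece, Submodule.map_span_le]
  rintro _ ⟨S, hS, hcard, rfl⟩
  obtain ⟨i, j, h1, hij, hj, rfl⟩ := exists_pair_of_subset_Icc hS hcard
  exact hd.apply_pair_mem_supported h1 hij hj

theorem apply_oneTriple (hd : IsM0Differential n d) {x : Lam}
    (hx : x ∈ rankPiece (Set.Icc 1 n) 2) {a b : ℕ} (ha : 2 ≤ a) (hab : a < b) :
    d x {1, a, b} = x {a + 1, b} + x {a, b + 1} := by
  rw [rankPiece] at hx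
  induction hx using Submodule.span_induction with
  | mem y hy =>
    obtain ⟨S, hS, hcard, rfl⟩ := hy
    obtain ⟨i, j, h1, hij, hj, rfl⟩ := exists_pair_of_subset_Icc hS hcard
    exact hd.apply_pair_apply_oneTriple h1 hij hj ha hab
  | zero => simp
  | add y z _ _ hy hz =>
    simp only [map_add, Finsupp.add_apply, hy, hz]
    abel
  | smul c y _ hy => simp only [map_smul, Finsupp.smul_apply, hy, smul_add]

theorem apply_eq_zero_iff (hd : IsM0Differential n d) {x : Lam}
    (hx : x ∈ rankPiece (Set.Icc 1 n) 2) :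
    d x = 0 ↔ ∀ a b, 2 ≤ a → a < b → b ≤ n → x {a + 1, b} = x {a, b + 1} := by
  constructor
  · intro h a b ha hab _
    rw [← CharTwo.add_eq_zero, ← hd.apply_oneTriple hx ha hab, h]
    rfl
  · intro h
    ext T
    by_cases hT : T ∈ oneTriples n
    · obtain ⟨a, b, ha, hab, hb, rfl⟩ := hT
      rw [hd.apply_oneTriple hx ha hab, h a b ha hab hb, CharTwo.add_self_eq_zero]
      rfl
    · exact (mem_supported' _ _).1 (hd.map_rankPiece_two_le ⟨x, hx, rfl⟩) T hT

theorem apply_single_one_pair (hd : IsM0Differential n d) {j : ℕ} (hj : 1 < j) (hjn : j ≤ n) :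
    d (single {1, j} 1) = 0 := by
  rw [hd.apply_pair le_rfl hj hjn, if_neg (by omega), if_neg (by omega), add_zero]

theorem apply_F1 (hd : IsM0Differential n d) {i : ℕ} (h : 2 * i ≤ n + 1) : d (F1 i) = 0 := by
  refine (hd.apply_eq_zero_iff (F1_mem_rankPiece h)).2 fun a b ha hab _ => ?_
  rcases Nat.lt_or_eq_of_le hab with hab' | rfl
  · rw [F1_apply_pair hab', F1_apply_pair (by omega : a < b + 1)]
    split_ifs <;> first | rfl | omega
  · rw [F1_apply_pair (by omega : a < a + 1 + 1), if_neg (by omega)]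
    exact apply_eq_zero_of_mem_rankPiece (F1_mem_rankPiece h) (by simp)

theorem map_rankPiece_one (hd : IsM0Differential n d) :
    (rankPiece (Set.Icc 1 n) 1).map d = supported K2 K2 (onePairs n) := by
  rw [supported_eq_span_single, rankPiece, Submodule.map_span]
  apply le_antisymm
  · rw [Submodule.span_le]
    rintro _ ⟨_, ⟨S, hS, hcard, rfl⟩, rfl⟩
    obtain ⟨i, rfl⟩ := Finset.card_eq_one.1 hcard
    obtain ⟨hi1, hin⟩ := hS (by simp : i ∈ _)
    change d (e i) ∈ _
    rw [hd.apply_e hi1 hin]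
    split_ifs
    · exact Submodule.subset_span ⟨{1, i - 1}, ⟨i - 1, by omega, by omega, rfl⟩, rfl⟩
    · exact zero_mem _
  · rw [Submodule.span_le]
    rintro _ ⟨_, ⟨j, hj2, hjn, rfl⟩, rfl⟩
    refine Submodule.subset_span ⟨e (j + 1), ⟨{j + 1}, ?_, rfl, rfl⟩, ?_⟩
    · simp only [Finset.coe_singleton, Set.singleton_subset_iff, Set.mem_Icc]
      omega
    · rw [hd.apply_e (by omega) (by omega), if_pos (by omega), Nat.add_sub_cancel]

theorem h2Rep_mem (hd : IsM0Differential n d) (hn : 2 ≤ n) (k : Unit ⊕ F1Index n) :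
    h2Rep n k ∈ rankPiece (Set.Icc 1 n) 2 ⊓ LinearMap.ker d := by
  rcases k with _ | i
  · rw [h2Rep, Sum.elim_inl, e_wedge_e (by omega)]
    exact ⟨pair_mem_rankPiece le_rfl (by omega) le_rfl 1,
      hd.apply_single_one_pair (by omega) le_rfl⟩
  · exact ⟨F1_mem_rankPiece i.2.2, hd.apply_F1 i.2.2⟩

theorem mem_supported_onePairs (hd : IsM0Differential n d) {z : Lam}
    (hz : z ∈ rankPiece (Set.Icc 1 n) 2) (hdz : d z = 0) (hcoord : ∀ k, z (h2Coord n k) = 0) :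
    z ∈ supported K2 K2 (onePairs n) := by
  have hout : ∀ i j, n < j → z {i, j} = 0 := fun i j hj =>
    apply_eq_zero_of_mem_rankPiece hz fun h => absurd (h.1 (by simp : j ∈ _)).2 (by omega)
  have hanti : ∀ i j, 2 ≤ i → i ≤ j → z {i, j} = z {2, i + j - 2} := fun i j =>
    apply_eq_apply_two_of_shift (f := fun i j => z {i, j}) hout ((hd.apply_eq_zero_iff hz).1 hdz)
  rw [mem_supported']
  intro S hS
  by_contra hzS
  have hval : ↑S ⊆ Set.Icc 1 n ∧ S.card = 2 :=
    by_contra fun h => hzS (apply_eq_zero_of_mem_rankPiece hz h)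
  obtain ⟨a, b, ha, hab, hb, rfl⟩ := exists_pair_of_subset_Icc hval.1 hval.2
  rcases ha.eq_or_lt with rfl | ha
  · obtain rfl | hbn := hb.eq_or_lt
    · exact hzS (hcoord (.inl ()))
    · exact hS ⟨b, by omega, hbn, rfl⟩
  rw [hanti a b ha hab.le] at hzS
  obtain ⟨m, hm | hm⟩ := Nat.even_or_odd' (a + b)
  · rw [show a + b - 2 = m + m - 2 by omega, ← hanti m m (by omega) le_rfl] at hzS
    exact hzS (apply_eq_zero_of_mem_rankPiece hz (by simp))
  · rw [show a + b - 2 = 2 * m - 1 by omega] at hzS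
    rcases le_or_gt (2 * m) (n + 1) with hmn | hmn
    · exact hzS (hcoord (.inr ⟨m, by omega, hmn⟩))
    · exact hzS (hout _ _ (by omega))

end IsM0Differential

/-- Theorem: for `n ≥ 3`, the classes of `e¹ ∧ eⁿ` and of
`F(eⁱ, eⁱ) = Σ_{l=0}^{i−2} e^{i−l} ∧ e^{i+1+l}` for `2 ≤ i ≤ (n+1)/2` form a basis of
`H²(𝔪₀(n))` over `ℤ₂`; in particular `b₂(𝔪₀(n)) = ⌊(n+1)/2⌋`. Here `d` is the
Chevalley–Eilenberg differential of `𝔪₀(n)`, the 2-cocycles are `Z = Λ²(e¹,…,eⁿ) ∩ ker d`,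
the 2-coboundaries are `B = d(Λ¹(e¹,…,eⁿ))`, and `H²(𝔪₀(n)) = Z ⧸ (B ∩ Z)`; the condition
`2 ≤ i ≤ (n+1)/2` is encoded as `2 ≤ i ∧ 2 * i ≤ n + 1`. -/
theorem H2_m0n (n : ℕ) (hn : 3 ≤ n)
    (d : Module.End K2 Lam)
    (hd : IsDerivation d) (hd1 : d (e 1) = 0) (hd2 : d (e 2) = 0)
    (hdi : ∀ i, 3 ≤ i → i ≤ n → d (e i) = wedge (e 1) (e (i - 1)))
    (Z B : Submodule K2 Lam)
    (hZ : Z = rankPiece (Set.Icc 1 n) 2 ⊓ LinearMap.ker d)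
    (hB : B = Submodule.map d (rankPiece (Set.Icc 1 n) 1)) :
    (wedge (e 1) (e n) ∈ Z) ∧
    (∀ i : {i : ℕ // 2 ≤ i ∧ 2 * i ≤ n + 1}, F1 i.1 ∈ Z) ∧
    LinearIndependent K2
      (Sum.elim (fun _ : Unit => cls Z B (wedge (e 1) (e n)))
        (fun i : {i : ℕ // 2 ≤ i ∧ 2 * i ≤ n + 1} => cls Z B (F1 i.1))) ∧
    Submodule.span K2 (Set.range
      (Sum.elim (fun _ : Unit => cls Z B (wedge (e 1) (e n)))
        (fun i : {i : ℕ // 2 ≤ i ∧ 2 * i ≤ n + 1} => cls Z B (F1 i.1)))) = ⊤ ∧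
    Module.finrank K2 (↥Z ⧸ Submodule.comap Z.subtype B) = (n + 1) / 2 := by
  have hd' : IsM0Differential n d := ⟨hd, hd1, hd2, hdi⟩
  have hB' : B = supported K2 K2 (onePairs n) := hB.trans hd'.map_rankPiece_one
  have hrepZ : ∀ k, h2Rep n k ∈ Z := hZ ▸ hd'.h2Rep_mem (by omega)
  have hfam : Sum.elim (fun _ : Unit => cls Z B (wedge (e 1) (e n)))
      (fun i : F1Index n => cls Z B (F1 i.1)) =
      fun k => Submodule.Quotient.mk ⟨h2Rep n k, hrepZ k⟩ := by
    funext k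
    rcases k with _ | i <;> exact dif_pos _
  obtain ⟨hli, hspan⟩ := linearIndependent_and_span_eq_top_quotient (B := B)
    (fun k => ⟨h2Rep n k, hrepZ k⟩) (fun k => lapply (h2Coord n k))
    (fun k b hb => (mem_supported' _ _).1 (hB' ▸ hb) _ (h2Coord_notMem_onePairs k))
    (h2Rep_apply_h2Coord (by omega))
    (fun z hz h0 => by
      rw [hZ] at hz
      exact hB' ▸ hd'.mem_supported_onePairs hz.1 hz.2 h0)
  rw [hfam]
  refine ⟨hrepZ (.inl ()), fun i => hrepZ (.inr i), hli, hspan, ?_⟩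
  rw [Module.finrank_eq_nat_card_basis (Module.Basis.mk hli hspan.ge), Nat.card_sum,
    Nat.card_unique, card_F1Index]
  omega
end

section
/- Let p ≥ 2, let x be an integer and y a positive integer, and suppose x ≤ 2^p − 2, y ≤ 2^p − 2, and x + y > 0. Then C(2^p − 1 − x, y) ≡ C(y + x, y) (mod 2). -/
private lemma lucas2 (n k : ℕ) :
    n.choose k % 2 = (Nat.choose (n % 2) (k % 2) * Nat.choose (n / 2) (k / 2)) % 2 :=
  haveI : Fact (Nat.Prime 2) := ⟨Nat.prime_two⟩
  Choose.choose_modEq_choose_mod_mul_choose_div_nat (p := 2)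

private lemma key1 : ∀ p a b : ℕ, 1 ≤ b → a ≤ 2 ^ p - 1 → b ≤ 2 ^ p - 1 →
    (2 ^ p - 1 - a).choose b % 2 = (b + a).choose b % 2 := by
  intro p
  induction p with
  | zero => intro a b hb _ hb2; omega
  | succ p ih =>
    intro a b hb ha hb2
    have hA : 1 ≤ 2 ^ p := Nat.one_le_two_pow
    have hpow : 2 ^ (p + 1) = 2 * 2 ^ p := by ring
    rw [lucas2 (2 ^ (p+1) - 1 - a) b, lucas2 (b + a) b]
    have e1 : (2 ^ (p+1) - 1 - a) / 2 = 2 ^ p - 1 - a / 2 := by omega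
    have e2 : (2 ^ (p+1) - 1 - a) % 2 = 1 - a % 2 := by omega
    rw [e1, e2]
    rcases Nat.mod_two_eq_zero_or_one a with hr | hr <;>
      rcases Nat.mod_two_eq_zero_or_one b with hs | hs
    · -- r = 0, s = 0
      have e3 : (b + a) % 2 = 0 := by omega
      have e4 : (b + a) / 2 = b / 2 + a / 2 := by omega
      rw [hr, hs, e3, e4]
      simp only [Nat.choose_self, Nat.choose_zero_right, one_mul, Nat.sub_zero,
        Nat.choose_one_right]
      exact ih (a / 2) (b / 2) (by omega) (by omega) (by omega)
    · -- r = 0, s = 1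
      have e3 : (b + a) % 2 = 1 := by omega
      have e4 : (b + a) / 2 = b / 2 + a / 2 := by omega
      rw [hr, hs, e3, e4]
      simp only [Nat.choose_self, one_mul, Nat.sub_zero]
      rcases Nat.eq_zero_or_pos (b / 2) with hb0 | hb0
      · rw [hb0]; simp
      · exact ih (a / 2) (b / 2) hb0 (by omega) (by omega)
    · -- r = 1, s = 0
      have e3 : (b + a) % 2 = 1 := by omega
      have e4 : (b + a) / 2 = b / 2 + a / 2 := by omega
      rw [hr, hs, e3, e4]
      simp only [Nat.choose_zero_right, one_mul]
      exact ih (a / 2) (b / 2) (by omega) (by omega) (by omega)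
    · -- r = 1, s = 1 : both sides even
      have e3 : (b + a) % 2 = 0 := by omega
      rw [hr, hs, e3]
      simp [Nat.choose]

private lemma key2 : ∀ p c b : ℕ, 1 ≤ c → c ≤ b → b ≤ 2 ^ p - 1 →
    (2 ^ p - 1 + c).choose b % 2 = 0 := by
  intro p
  induction p with
  | zero => intro c b hc hcb hb; omega
  | succ p ih =>
    intro c b hc hcb hb
    have hA : 1 ≤ 2 ^ p := Nat.one_le_two_pow
    have hpow : 2 ^ (p + 1) = 2 * 2 ^ p := by ring
    rw [lucas2]
    rcases Nat.mod_two_eq_zero_or_one c with ht | ht <;>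
      rcases Nat.mod_two_eq_zero_or_one b with hs | hs
    · -- c even, b even
      have e1 : (2 ^ (p+1) - 1 + c) / 2 = 2 ^ p - 1 + c / 2 := by omega
      rw [e1, hs]
      have := ih (c / 2) (b / 2) (by omega) (by omega) (by omega)
      rw [Nat.mul_mod, this]; simp
    · -- c even, b odd
      have e1 : (2 ^ (p+1) - 1 + c) / 2 = 2 ^ p - 1 + c / 2 := by omega
      rw [e1, hs]
      have := ih (c / 2) (b / 2) (by omega) (by omega) (by omega)
      rw [Nat.mul_mod, this]; simp
    · -- c odd, b even
      have e1 : (2 ^ (p+1) - 1 + c) / 2 = 2 ^ p - 1 + (c / 2 + 1) := by omega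
      rw [e1, hs]
      have := ih (c / 2 + 1) (b / 2) (by omega) (by omega) (by omega)
      rw [Nat.mul_mod, this]; simp
    · -- c odd, b odd : low digit gives choose 0 1 = 0
      have e2 : (2 ^ (p+1) - 1 + c) % 2 = 0 := by omega
      rw [e2, hs]
      simp [Nat.choose]

/-- Lemma: for `p ≥ 2`, an integer `x` and a positive integer `y` with `x ≤ 2^p − 2`,
`y ≤ 2^p − 2` and `x + y > 0`, one has `C(2^p − 1 − x, y) ≡ C(y + x, y) (mod 2)`.
(Under the hypotheses both `2^p − 1 − x` and `y + x` are nonnegative integers, so the binomial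
coefficients are the usual ones, computed after `Int.toNat`.) -/
theorem choose_two_pow_sub_congr (p : ℕ) (hp : 2 ≤ p) (x y : ℤ)
    (hy : 0 < y) (hx : x ≤ 2 ^ p - 2) (hy2 : y ≤ 2 ^ p - 2) (hxy : 0 < x + y) :
    ((2 ^ p - 1 - x).toNat.choose y.toNat) % 2 = ((y + x).toNat.choose y.toNat) % 2 := by
  have hpow : ((2 : ℤ) ^ p) = ((2 ^ p : ℕ) : ℤ) := by push_cast; ring
  have hA : 1 ≤ 2 ^ p := Nat.one_le_two_pow
  rw [hpow] at hx hy2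
  rcases le_or_gt 0 x with hx0 | hx0
  · -- x ≥ 0
    have e1 : ((2 : ℤ) ^ p - 1 - x).toNat = 2 ^ p - 1 - x.toNat := by rw [hpow]; omega
    have e2 : (y + x).toNat = y.toNat + x.toNat := by omega
    rw [e1, e2]
    exact key1 p x.toNat y.toNat (by omega) (by omega) (by omega)
  · -- x < 0 : RHS is 0, LHS is 0 by key2
    have e2 : (y + x).toNat < y.toNat := by omega
    rw [Nat.choose_eq_zero_of_lt e2]
    have e1 : ((2 : ℤ) ^ p - 1 - x).toNat = 2 ^ p - 1 + (-x).toNat := by rw [hpow]; omega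
    rw [e1]
    exact key2 p (-x).toNat y.toNat (by omega) (by omega) (by omega)
end

section
/- For all integers q ≥ 1 and N ≥ 0, the sum Σ_{l=0}^{N} C(N, l) · C(2q + N − l, q + l) is even. -/
/-!
`Σ_l C(N, l) C(m + N - l, k + l)` is the coefficient of `x ^ (k + N)` in
`(1 + x) ^ m * (1 + x + x ^ 2) ^ N`, and `Σ_j C(N, j) C(m + 2 j, k + j)` is the same coefficient of
`(1 + x) ^ m * (x + (1 + x) ^ 2) ^ N`. The two polynomials agree modulo 2, so the sums have the
same parity; each induction step on `N` multiplies by one more factor. For `m = 2 q`,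
`k = q` every term of the second sum is a multiple of the central binomial coefficient
`C(2 (q + j), q + j)`, which is even since `q + j ≥ 1`.
-/

open Finset Nat

def antidiagChooseSum (m k N : ℕ) : ℕ :=
  ∑ l ∈ range (N + 1), N.choose l * (m + N - l).choose (k + l)

def doubledChooseSum (m k N : ℕ) : ℕ :=
  ∑ j ∈ range (N + 1), N.choose j * (m + 2 * j).choose (k + j)

theorem antidiagChooseSum_succ (m k N : ℕ) :
    antidiagChooseSum m k (N + 1) =
      antidiagChooseSum (m + 1) k N + antidiagChooseSum m (k + 1) N := by
  have hsplit := sum_choose_succ_mul (R := ℕ) (fun i j => (m + j).choose (k + i)) N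
  simp only [Nat.cast_id] at hsplit
  simp only [antidiagChooseSum]
  convert hsplit using 2
  · rename_i i hi
    rw [mem_range] at hi
    congr 2; omega
  all_goals
    refine sum_congr rfl fun i hi => ?_
    rw [mem_range] at hi
    congr 2 <;> omega

theorem doubledChooseSum_succ (m k N : ℕ) :
    doubledChooseSum m k (N + 1) =
      doubledChooseSum m k N + doubledChooseSum (m + 2) (k + 1) N := by
  have hsplit := sum_choose_succ_mul (R := ℕ) (fun i _ => (m + 2 * i).choose (k + i)) N
  simp only [Nat.cast_id] at hsplit
  simp only [doubledChooseSum]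
  convert hsplit using 2
  refine sum_congr rfl fun i _ => ?_
  congr 2 <;> omega

theorem doubledChooseSum_succ_succ (m k N : ℕ) :
    doubledChooseSum (m + 1) (k + 1) N =
      doubledChooseSum m (k + 1) N + doubledChooseSum m k N := by
  simp only [doubledChooseSum, ← sum_add_distrib, ← mul_add]
  refine sum_congr rfl fun j _ => ?_
  rw [show m + 1 + 2 * j = m + 2 * j + 1 by omega, show k + 1 + j = k + j + 1 by omega,
    choose_succ_succ', add_comm]

theorem antidiagChooseSum_modEq_doubledChooseSum (m k N : ℕ) :
    antidiagChooseSum m k N ≡ doubledChooseSum m k N [MOD 2] := by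
  induction N generalizing m k with
  | zero => simp [antidiagChooseSum, doubledChooseSum, Nat.ModEq.refl]
  | succ N ih =>
    simp only [← ZMod.natCast_eq_natCast_iff] at ih ⊢
    rw [antidiagChooseSum_succ, doubledChooseSum_succ, doubledChooseSum_succ_succ (m + 1),
      doubledChooseSum_succ_succ m]
    push_cast [ih]
    linear_combination -CharTwo.add_self_eq_zero (doubledChooseSum m k N : ZMod 2)

theorem two_dvd_doubledChooseSum {q : ℕ} (hq : 1 ≤ q) (N : ℕ) :
    2 ∣ doubledChooseSum (2 * q) q N := by
  refine dvd_sum fun j _ => Dvd.dvd.mul_left ?_ _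
  rw [← mul_add, ← centralBinom_eq_two_mul_choose]
  exact two_dvd_centralBinom_of_one_le (by omega)

/-- Lemma: for all integers `q ≥ 1` and `N ≥ 0`, the sum
`Σ_{l=0}^{N} C(N, l) · C(2q + N − l, q + l)` is even. -/
theorem sum_choose_mul_choose_even (q N : ℕ) (hq : 1 ≤ q) :
    2 ∣ ∑ l ∈ Finset.range (N + 1), N.choose l * (2 * q + N - l).choose (q + l) :=
  ((antidiagChooseSum_modEq_doubledChooseSum (2 * q) q N).dvd_iff dvd_rfl).2
    (two_dvd_doubledChooseSum hq N)
end

section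
/- For every integer n ≥ 0, the sum Σ_{s=0}^{⌊n/2⌋} C(n, s) · C(n − s, s) is odd; equivalently, the central coefficient (the coefficient of tⁿ) of the polynomial (t² + t + 1)ⁿ is odd. -/
/-!
Expanding `(X² + (X + 1))ⁿ` binomially, the `s`-th term contributes `C(n, s) · C(n - s, s)` to the
coefficient of `Xⁿ`, so the sum is that coefficient. Modulo 2, Frobenius gives
`f ^ (2m) = expand 2 (f ^ m)` for `f = X² + X + 1`, and the coefficient of `X^(2m+1)` in
`expand 2 (f ^ m) * f` only picks up the middle term `X` of `f`. Hence the central coefficient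
modulo 2 satisfies `c(2m) = c(2m+1) = c(m)`, and `c(0) = 1`.
-/

open Polynomial Finset

lemma coeff_expand_two_mul_X_sq_add_X_add_one {R : Type*} [CommSemiring R] (g : R[X]) (m : ℕ) :
    (expand R 2 g * (X ^ 2 + X + 1)).coeff (2 * m + 1) = g.coeff m := by
  have hsplit : expand R 2 g * (X ^ 2 + X + 1) = expand R 2 g * X + expand R 2 (g * (X + 1)) := by
    simp only [map_mul, map_add, expand_X, map_one]; ring
  have hodd : ¬ 2 ∣ 2 * m + 1 := by omega
  rw [hsplit, coeff_add, coeff_mul_X, coeff_expand_mul' two_pos, coeff_expand two_pos, if_neg hodd,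
    add_zero]

theorem coeff_X_sq_add_X_add_one_pow_self_zmod_two (n : ℕ) :
    (((X : (ZMod 2)[X]) ^ 2 + X + 1) ^ n).coeff n = 1 := by
  induction n using Nat.evenOddRec with
  | h0 => simp
  | h_even m ih => rw [pow_mul', ← ZMod.expand_card, coeff_expand_mul' two_pos, ih]
  | h_odd m ih =>
    rw [pow_succ, pow_mul', ← ZMod.expand_card, coeff_expand_two_mul_X_sq_add_X_add_one, ih]

theorem coeff_X_sq_add_X_add_one_pow_self {R : Type*} [CommSemiring R] (n : ℕ) :
    (((X : R[X]) ^ 2 + X + 1) ^ n).coeff n =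
      ∑ s ∈ range (n / 2 + 1), (n.choose s * (n - s).choose s : R) := by
  have hterm (s : ℕ) : ((X ^ 2) ^ s * (X + 1) ^ (n - s) * (n.choose s : R[X])).coeff n =
      if s ≤ n / 2 then (n.choose s * (n - s).choose s : R) else 0 := by
    rw [← pow_mul, coeff_mul_natCast, coeff_X_pow_mul', coeff_X_add_one_pow]
    by_cases hs : s ≤ n / 2
    · rw [if_pos (by omega), if_pos hs, Nat.choose_symm_of_eq_add (by omega : n - s = n - 2 * s + s),
        mul_comm]
    · rw [if_neg (by omega), if_neg hs, zero_mul]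
  rw [show (X : R[X]) ^ 2 + X + 1 = X ^ 2 + (X + 1) by ring, add_pow, finsetSum_coeff]
  simp only [hterm]
  rw [← sum_filter]
  congr 1
  ext s; simp only [mem_filter, mem_range]; omega

/-- Lemma: for every `n ≥ 0`, the sum `Σ_{s=0}^{⌊n/2⌋} C(n, s) · C(n − s, s)` is odd;
equivalently, the central coefficient (the coefficient of `tⁿ`) of `(t² + t + 1)ⁿ` is odd. -/
theorem central_coeff_odd (n : ℕ) :
    Odd (∑ s ∈ Finset.range (n / 2 + 1), n.choose s * (n - s).choose s) ∧
    Odd (((Polynomial.X ^ 2 + Polynomial.X + 1 : Polynomial ℤ) ^ n).coeff n) := by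
  have hsum : Odd (∑ s ∈ range (n / 2 + 1), n.choose s * (n - s).choose s) := by
    rw [← ZMod.natCast_eq_one_iff_odd, ← coeff_X_sq_add_X_add_one_pow_self_zmod_two n,
      coeff_X_sq_add_X_add_one_pow_self]
    push_cast; rfl
  refine ⟨hsum, ?_⟩
  rw [coeff_X_sq_add_X_add_one_pow_self]
  exact_mod_cast hsum
end

section
/- Let p ≥ 1 and let n = 2^p + m with 0 < m ≤ 2^p. Then for all integers k and i with 2 ≤ k ≤ m and 1 ≤ i ≤ k − 1, the sum Σ_{s=0}^{p−1} Σ_{h=0}^{m−k} C(2^s + 2(i−1) + h, n − 2^s + (i−1) − k − h) · C(m−k, h) is odd if i = 1 and even if 2 ≤ i ≤ k − 1. -/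
/-!
Reduce mod 2 and read the double sum as coefficients of polynomials over `ZMod 2`. With
`a = i - 1`, `M = m - k`, `D = 2^p + M + a` and `g = (1 + X)^(2a) (1 + X + X^2)^M`, the inner sum
over `h` is the coefficient of `X^(D - 2^s)` in `(1 + X)^(2^s) g = g + X^(2^s) g`, so the sum over
`s` telescopes to `g_(D-1) + g_(a+M)`. The first coefficient vanishes since
`deg g ≤ 2a + 2M < D - 1`.
For the second, write `1 + X + X^2 = (1 + X)^2 + X` and expand by the binomial theorem: the
coefficient becomes `Σ_j C(M, j) C(2(a + j), a + j)`, and central binomial coefficients are even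
except `C(0, 0) = 1`.
-/

/-- The binomial coefficient `C(N, t)` with an integer lower entry, with the convention that
`C(N, t) = 0` when `t < 0` (and, as usual, when `t > N`). -/
def chooseZ (N : ℕ) (t : ℤ) : ℕ := if 0 ≤ t then N.choose t.toNat else 0

open Polynomial Finset

lemma coeff_one_add_X_pow_mul_trinomial_pow {R : Type*} [CommSemiring R] (A M B : ℕ)
    (hMB : M ≤ B) :
    ((1 + X : R[X]) ^ A * (1 + X + X ^ 2) ^ M).coeff B =
      ∑ h ∈ range (M + 1), ((A + h).choose (B - h) * M.choose h : R) := by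
  rw [show (1 + X + X ^ 2 : R[X]) = X * (1 + X) + 1 by ring, add_pow _ _ M, mul_sum,
    finsetSum_coeff]
  refine sum_congr rfl fun h hh => ?_
  obtain ⟨c, rfl⟩ := Nat.exists_eq_add_of_le (show h ≤ B by grind)
  have : (1 + X : R[X]) ^ A * ((X * (1 + X)) ^ h * 1 ^ (M - h) * (M.choose h : R[X])) =
      C (M.choose h : R) * (X ^ h * (1 + X) ^ (A + h)) := by
    rw [C_eq_natCast, pow_add, mul_pow]; ring
  rw [this, coeff_C_mul, add_comm h c, coeff_X_pow_mul, coeff_one_add_X_pow, Nat.add_sub_cancel,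
    mul_comm]

section

variable {R : Type*} [CommRing R] [CharP R 2]

lemma sum_range_coeff_one_add_X_pow_two_pow_mul (g : R[X]) (p D : ℕ) (hD : 2 ^ p ≤ D) :
    ∑ s ∈ range p, ((1 + X) ^ 2 ^ s * g).coeff (D - 2 ^ s) =
      g.coeff (D - 1) + g.coeff (D - 2 ^ p) := by
  have hterm : ∀ s ∈ range p, ((1 + X) ^ 2 ^ s * g).coeff (D - 2 ^ s) =
      g.coeff (D - 2 ^ s) - g.coeff (D - 2 ^ (s + 1)) := by
    intro s hs
    have hsp : 2 ^ (s + 1) ≤ D := (Nat.pow_le_pow_right two_pos (mem_range.1 hs)).trans hD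
    rw [add_pow_char_pow, one_pow, add_mul, one_mul, coeff_add, CharTwo.sub_eq_add,
      show D - 2 ^ s = D - 2 ^ (s + 1) + 2 ^ s by rw [pow_succ] at *; omega, coeff_X_pow_mul]
  rw [sum_congr rfl hterm, sum_range_sub', pow_zero, CharTwo.sub_eq_add]

lemma natCast_centralBinom_eq_ite (l : ℕ) : (l.centralBinom : R) = if l = 0 then 1 else 0 := by
  split_ifs with hl
  · simp [hl]
  · exact (CharP.cast_eq_zero_iff R 2 _).2 (Nat.two_dvd_centralBinom_of_one_le (by omega))

lemma coeff_one_add_X_pow_two_mul_mul_trinomial_pow (a M : ℕ) :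
    ((1 + X : R[X]) ^ (2 * a) * (1 + X + X ^ 2) ^ M).coeff (a + M) = if a = 0 then 1 else 0 := by
  have htri : (1 + X + X ^ 2 : R[X]) = (1 + X) ^ 2 + X := by
    linear_combination (-X) * (CharTwo.two_eq_zero (R := R[X]))
  rw [htri, add_pow _ _ M, mul_sum, finsetSum_coeff]
  have hterm : ∀ j ∈ range (M + 1), ((1 + X : R[X]) ^ (2 * a) *
      (((1 + X) ^ 2) ^ j * X ^ (M - j) * (M.choose j : R[X]))).coeff (a + M) =
      (M.choose j * (a + j).centralBinom : R) := by
    intro j hj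
    have : (1 + X : R[X]) ^ (2 * a) * (((1 + X) ^ 2) ^ j * X ^ (M - j) * (M.choose j : R[X])) =
        C (M.choose j : R) * (X ^ (M - j) * (1 + X) ^ (2 * (a + j))) := by
      rw [C_eq_natCast, mul_add, pow_add, pow_mul, pow_mul]; ring
    rw [this, coeff_C_mul, show a + M = a + j + (M - j) by grind,
      coeff_X_pow_mul, coeff_one_add_X_pow, Nat.centralBinom_eq_two_mul_choose]
  have hvanish : ∀ j ∈ range (M + 1), j ≠ 0 → (M.choose j * (a + j).centralBinom : R) = 0 :=
    fun j _ hj => by rw [natCast_centralBinom_eq_ite, if_neg (by omega), mul_zero]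
  rw [sum_congr rfl hterm, sum_eq_single 0 hvanish (by simp)]
  simp [natCast_centralBinom_eq_ite]

end

lemma chooseZ_of_eq_natCast {N u : ℕ} {t : ℤ} (h : t = u) : chooseZ N t = N.choose u := by
  simp [chooseZ, h]

theorem sum_odd_iff_i_eq_one_general (p m n k i : ℕ)
    (hn : n = 2 ^ p + m) (hm : m ≤ 2 ^ p)
    (hkm : k ≤ m) (hi1 : 1 ≤ i) (hik : i ≤ k - 1)
    (S : ℕ)
    (hS : S = ∑ s ∈ Finset.range p, ∑ h ∈ Finset.range (m - k + 1),
      chooseZ (2 ^ s + 2 * (i - 1) + h)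
          ((n : ℤ) - 2 ^ s + ((i : ℤ) - 1) - k - h) * (m - k).choose h) :
    (i = 1 → Odd S) ∧ (2 ≤ i → Even S) := by
  obtain ⟨a, rfl⟩ : ∃ a, i = a + 1 := ⟨i - 1, by omega⟩
  set M := m - k
  set D := 2 ^ p + M + a
  set g : (ZMod 2)[X] := (1 + X) ^ (2 * a) * (1 + X + X ^ 2) ^ M
  have hS_coeff : (S : ZMod 2) = ∑ s ∈ range p, ((1 + X) ^ 2 ^ s * g).coeff (D - 2 ^ s) := by
    rw [hS, Nat.cast_sum]
    refine sum_congr rfl fun s hs => ?_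
    have hsp : 2 ^ s < 2 ^ p := Nat.pow_lt_pow_right one_lt_two (mem_range.1 hs)
    rw [← mul_assoc, ← pow_add, coeff_one_add_X_pow_mul_trinomial_pow _ _ _ (by omega),
      Nat.cast_sum]
    refine sum_congr rfl fun h hh => ?_
    have hhM : h ≤ M := Nat.lt_succ_iff.1 (mem_range.1 hh)
    have harg :
        (n : ℤ) - 2 ^ s + (((a + 1 : ℕ) : ℤ) - 1) - k - h = ((D - 2 ^ s - h : ℕ) : ℤ) := by
      rw [← Nat.cast_ofNat, ← Nat.cast_pow]
      simp only [D, M]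
      generalize 2 ^ s = Q at hsp ⊢
      generalize 2 ^ p = P at hsp hn ⊢
      omega
    rw [chooseZ_of_eq_natCast harg, Nat.add_sub_cancel, Nat.cast_mul]
  have hg_deg : g.natDegree < D - 1 := by
    have : g.natDegree ≤ 2 * a + M * 2 := by simp only [g]; compute_degree
    omega
  have hS_mod : (S : ZMod 2) = if a = 0 then 1 else 0 := by
    rw [hS_coeff, sum_range_coeff_one_add_X_pow_two_pow_mul g p D (by omega),
      coeff_eq_zero_of_natDegree_lt hg_deg, zero_add, show D - 2 ^ p = a + M by omega,
      coeff_one_add_X_pow_two_mul_mul_trinomial_pow]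
  refine ⟨fun ha => ?_, fun ha => ?_⟩
  · rw [← ZMod.natCast_eq_one_iff_odd, hS_mod, if_pos (by omega)]
  · rw [← ZMod.natCast_eq_zero_iff_even, hS_mod, if_neg (by omega)]

/-- Lemma: let `p ≥ 1` and `n = 2^p + m` with `0 < m ≤ 2^p`. For all integers `k, i` with
`2 ≤ k ≤ m` and `1 ≤ i ≤ k − 1`, the sum
`Σ_{s=0}^{p−1} Σ_{h=0}^{m−k} C(2^s + 2(i−1) + h, n − 2^s + (i−1) − k − h) · C(m−k, h)`
is odd if `i = 1` and even if `2 ≤ i ≤ k − 1`. -/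
theorem sum_odd_iff_i_eq_one (p m n k i : ℕ) (hp : 1 ≤ p)
    (hn : n = 2 ^ p + m) (hm0 : 0 < m) (hm : m ≤ 2 ^ p)
    (hk2 : 2 ≤ k) (hkm : k ≤ m) (hi1 : 1 ≤ i) (hik : i ≤ k - 1)
    (S : ℕ)
    (hS : S = ∑ s ∈ Finset.range p, ∑ h ∈ Finset.range (m - k + 1),
      chooseZ (2 ^ s + 2 * (i - 1) + h)
          ((n : ℤ) - 2 ^ s + ((i : ℤ) - 1) - k - h) * (m - k).choose h) :
    (i = 1 → Odd S) ∧ (2 ≤ i → Even S) :=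
  sum_odd_iff_i_eq_one_general p m n k i hn hm hkm hi1 hik S hS
end

section
/- Let p ≥ 1 and let s be an integer with 0 < s ≤ 2^{p−1}; set l = 2^{p−1} + s. Then Σ_{j=1}^{l−1} ( 2·(j − 2^{⌊log₂ j⌋}) + 1 ) = (2^{2p−2} − 1)/3 + s². -/
/-!
On the dyadic block `[2^k, 2^(k+1))` the summand is `2 (j - 2^k) + 1`, so it runs through the odd
numbers `1, 3, 5, …`. The first `s` terms of a block therefore add up to `s^2`; in particular a
full block contributes `4^k`, and the sum is `1 + 4 + ⋯ + 4^(p-2) + s^2 = (4^(p-1) - 1)/3 + s^2`.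
-/

open Finset

/-- Sequence A006257, the solution of the Josephus problem. -/
def josephus (j : ℕ) : ℕ := 2 * (j - 2 ^ Nat.log 2 j) + 1

lemma josephus_two_pow_add {q i : ℕ} (hi : i < 2 ^ q) : josephus (2 ^ q + i) = 2 * i + 1 := by
  have hlog : Nat.log 2 (2 ^ q + i) = q :=
    Nat.log_eq_of_pow_le_of_lt_pow (by omega) (by rw [pow_succ]; omega)
  simp [josephus, hlog]

lemma sum_range_two_mul_add_one (s : ℕ) : ∑ i ∈ range s, (2 * i + 1) = s ^ 2 := by
  induction s with
  | zero => rfl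
  | succ s ih => rw [sum_range_succ, ih]; ring

lemma sum_josephus_Ico_two_pow {q s : ℕ} (hs : s ≤ 2 ^ q) :
    ∑ j ∈ Ico (2 ^ q) (2 ^ q + s), josephus j = s ^ 2 := by
  rw [sum_Ico_eq_sum_range, Nat.add_sub_cancel_left, ← sum_range_two_mul_add_one]
  exact sum_congr rfl fun i hi => josephus_two_pow_add (by simp at hi; omega)

lemma sum_josephus_Ico_one_two_pow (q : ℕ) :
    ∑ j ∈ Ico 1 (2 ^ q), josephus j = ∑ k ∈ range q, 4 ^ k := by
  induction q with
  | zero => rfl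
  | succ q ih =>
    have hblock : ∑ j ∈ Ico (2 ^ q) (2 ^ q + 2 ^ q), josephus j = 4 ^ q := by
      rw [sum_josephus_Ico_two_pow le_rfl, ← pow_mul, mul_comm, pow_mul]; norm_num
    rw [pow_succ, mul_two, ← sum_Ico_consecutive _ Nat.one_le_two_pow (Nat.le_add_right _ _), ih,
      hblock, sum_range_succ]

theorem partial_sum_A006257_general (p s : ℕ) (hs : s ≤ 2 ^ (p - 1)) :
    ∑ j ∈ Finset.Icc 1 (2 ^ (p - 1) + s - 1), (2 * (j - 2 ^ (Nat.log 2 j)) + 1)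
      = (2 ^ (2 * p - 2) - 1) / 3 + s ^ 2 := by
  change ∑ j ∈ Icc 1 (2 ^ (p - 1) + s - 1), josephus j = _
  rw [Icc_sub_one_right_eq_Ico_of_not_isMin (by simp),
    ← sum_Ico_consecutive _ Nat.one_le_two_pow (Nat.le_add_right _ _),
    sum_josephus_Ico_one_two_pow, sum_josephus_Ico_two_pow hs, Nat.geomSum_eq (by norm_num),
    show 2 * p - 2 = 2 * (p - 1) by omega, pow_mul]
  rfl

/-- Lemma: let `p ≥ 1` and let `s` be an integer with `0 < s ≤ 2^{p−1}`; set
`l = 2^{p−1} + s`. Then `Σ_{j=1}^{l−1} (2(j − 2^{⌊log₂ j⌋}) + 1) = (2^{2p−2} − 1)/3 + s²`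
(the division by `3` is exact). -/
theorem partial_sum_A006257 (p s : ℕ) (hp : 1 ≤ p) (hs0 : 0 < s) (hs : s ≤ 2 ^ (p - 1)) :
    ∑ j ∈ Finset.Icc 1 (2 ^ (p - 1) + s - 1), (2 * (j - 2 ^ (Nat.log 2 j)) + 1)
      = (2 ^ (2 * p - 2) - 1) / 3 + s ^ 2 :=
  partial_sum_A006257_general p s hs
end
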